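/- Let α ∈ (0,1), c, τ > 0, η_n = c n^{-α}, and let (s_n) be nonnegative reals with s_{n+1} ≤ (1 - η_n)s_n + τ η_n² for all n ≥ 1. Let n₀ > 1 be the smallest integer with η_{n₀} ≤ 1 and set t = 1 - 2^{α-1} ≥ 0. Then for every n ≥ 2n₀, s_{n+1} ≤ (τ c² φ_{1-2α}(n) + s_{n₀} exp(c n₀^{1-α}/(1-α))) · exp(-c t (n+1)^{1-α}/(1-α)) + τ 2^α c / (n-2)^α, where φ_γ is as in Chung's lemma. -/

import Mathlib

noncomputable def chungPhi (c : ℝ) (x : ℝ) : ℝ :=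
  if c = 0 then Real.log x else (x ^ c - 1) / c

open Finset Real

/-!
Unrolling the recursion from `n₀` gives
`s (n+1) ≤ P(n₀) s n₀ + τ ∑_{n₀ ≤ k ≤ n} η k ^ 2 P(k+1)` with `P(a) = ∏_{a ≤ j ≤ n} (1 - η j)`,
and `P(a) ≤ exp (-∑ η j)`, where the sum is compared with `∫ c x^(-α) dx`, a difference of values
of `c φ_{1-α}`. Split the sum at `m = n / 2`. For `k < m`, `(k+1)^(1-α) ≤ 2^(α-1) (n+1)^(1-α)`, so
`P(k+1) ≤ exp (-c t (n+1)^(1-α) / (1-α))`, while `∑ η k ^ 2 ≤ c² φ_{1-2α}(n)`. For `k ≥ m`,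
`η k ^ 2 ≤ η m η k` and `∑ η k P(k+1) = 1 - P(m) ≤ 1` telescopes, leaving
`η m ≤ 2^α c / (n-2)^α`.
-/

section ChungPhi

variable {γ : ℝ}

lemma hasDerivAt_chungPhi (γ : ℝ) {x : ℝ} (hx : 0 < x) :
    HasDerivAt (chungPhi γ) (x ^ (γ - 1)) x := by
  unfold chungPhi
  split_ifs with h
  · simpa [h, rpow_neg_one] using hasDerivAt_log hx.ne'
  · simpa [mul_div_cancel_left₀ _ h] using
      ((hasDerivAt_rpow_const (p := γ) (Or.inl hx.ne')).sub_const 1).div_const γ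

lemma chungPhi_of_ne_zero (hγ : γ ≠ 0) (x : ℝ) : chungPhi γ x = (x ^ γ - 1) / γ :=
  if_neg hγ

lemma chungPhi_one (γ : ℝ) : chungPhi γ 1 = 0 := by
  unfold chungPhi
  split_ifs <;> simp

lemma deriv_chungPhi (γ : ℝ) {x : ℝ} (hx : 0 < x) : deriv (chungPhi γ) x = x ^ (γ - 1) :=
  (hasDerivAt_chungPhi γ hx).deriv

lemma differentiableOn_chungPhi (γ : ℝ) : DifferentiableOn ℝ (chungPhi γ) (Set.Ioi 0) :=
  fun _ hx => (hasDerivAt_chungPhi γ hx).differentiableAt.differentiableWithinAt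

lemma strictMonoOn_chungPhi (γ : ℝ) : StrictMonoOn (chungPhi γ) (Set.Ioi 0) :=
  strictMonoOn_of_deriv_pos (convex_Ioi 0) (differentiableOn_chungPhi γ).continuousOn fun x hx => by
    rw [interior_Ioi] at hx
    rw [deriv_chungPhi γ hx]
    exact rpow_pos_of_pos hx _

lemma chungPhi_le_chungPhi {a b : ℝ} (ha : 0 < a) (hab : a ≤ b) : chungPhi γ a ≤ chungPhi γ b :=
  (strictMonoOn_chungPhi γ).monotoneOn ha (ha.trans_le hab) hab

lemma chungPhi_nonneg {x : ℝ} (hx : 1 ≤ x) : 0 ≤ chungPhi γ x :=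
  chungPhi_one γ ▸ chungPhi_le_chungPhi one_pos hx

/-- Tangent-line bounds: `chungPhi γ` is concave on `(0, ∞)` when `γ ≤ 1`. -/
lemma chungPhi_sub_le_mul_sub (hγ : γ ≤ 1) {a b : ℝ} (ha : 0 < a) (hab : a ≤ b) :
    chungPhi γ b - chungPhi γ a ≤ a ^ (γ - 1) * (b - a) := by
  have hsub : Set.Icc a b ⊆ Set.Ioi 0 := fun x hx => ha.trans_le hx.1
  refine (convex_Icc a b).image_sub_le_mul_sub_of_deriv_le
    ((differentiableOn_chungPhi γ).continuousOn.mono hsub)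
    ((differentiableOn_chungPhi γ).mono (interior_subset.trans hsub)) (fun x hx => ?_)
    a (Set.left_mem_Icc.2 hab) b (Set.right_mem_Icc.2 hab) hab
  rw [interior_Icc] at hx
  rw [deriv_chungPhi γ (ha.trans hx.1)]
  exact rpow_le_rpow_of_nonpos ha hx.1.le (by linarith)

lemma mul_sub_le_chungPhi_sub (hγ : γ ≤ 1) {a b : ℝ} (ha : 0 < a) (hab : a ≤ b) :
    b ^ (γ - 1) * (b - a) ≤ chungPhi γ b - chungPhi γ a := by
  have hsub : Set.Icc a b ⊆ Set.Ioi 0 := fun x hx => ha.trans_le hx.1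
  refine (convex_Icc a b).mul_sub_le_image_sub_of_le_deriv
    ((differentiableOn_chungPhi γ).continuousOn.mono hsub)
    ((differentiableOn_chungPhi γ).mono (interior_subset.trans hsub)) (fun x hx => ?_)
    a (Set.left_mem_Icc.2 hab) b (Set.right_mem_Icc.2 hab) hab
  rw [interior_Icc] at hx
  rw [deriv_chungPhi γ (ha.trans hx.1)]
  exact rpow_le_rpow_of_nonpos (ha.trans hx.1) hx.2.le (by linarith)

lemma chungPhi_sub_le_sum_rpow (hγ : γ ≤ 1) {a b : ℕ} (ha : 0 < a) (hab : a ≤ b) :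
    chungPhi γ b - chungPhi γ a ≤ ∑ k ∈ Ico a b, (k : ℝ) ^ (γ - 1) := by
  rw [← sum_Ico_sub (f := fun k : ℕ => chungPhi γ k) hab]
  gcongr with k hk
  have hk : (0 : ℝ) < k := by exact_mod_cast ha.trans_le (mem_Ico.1 hk).1
  simpa using chungPhi_sub_le_mul_sub hγ hk (le_add_of_nonneg_right zero_le_one)

lemma sum_rpow_le_chungPhi_sub (hγ : γ ≤ 1) {a b : ℕ} (ha : 1 < a) (hab : a ≤ b) :
    ∑ k ∈ Ico a b, (k : ℝ) ^ (γ - 1) ≤ chungPhi γ ((b : ℝ) - 1) - chungPhi γ ((a : ℝ) - 1) := by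
  rw [← sum_Ico_sub (f := fun k : ℕ => chungPhi γ ((k : ℝ) - 1)) hab]
  gcongr with k hk
  have hk : (1 : ℝ) < k := by exact_mod_cast ha.trans_le (mem_Ico.1 hk).1
  simpa using mul_sub_le_chungPhi_sub hγ (sub_pos.2 hk) (sub_le_self _ zero_le_one)

end ChungPhi

lemma prod_one_sub_le_exp_neg_sum {ι : Type*} (s : Finset ι) {x : ι → ℝ}
    (hx : ∀ i ∈ s, x i ≤ 1) : ∏ i ∈ s, (1 - x i) ≤ exp (-∑ i ∈ s, x i) := by
  rw [← sum_neg_distrib, exp_sum]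
  exact prod_le_prod (fun i hi => sub_nonneg.2 (hx i hi)) fun i _ => one_sub_le_exp_neg _

lemma sum_Ico_succ_top_mul_prod {R : Type*} [CommSemiring R] (b q : ℕ → R) {a n : ℕ}
    (h : a ≤ n) :
    ∑ k ∈ Ico a (n + 1), b k * ∏ j ∈ Ico (k + 1) (n + 1), q j
      = (∑ k ∈ Ico a n, b k * ∏ j ∈ Ico (k + 1) n, q j) * q n + b n := by
  rw [sum_Ico_succ_top h, sum_mul, Ico_self, prod_empty, mul_one]
  congr 1
  refine sum_congr rfl fun k hk => ?_
  rw [prod_Ico_succ_top (mem_Ico.1 hk).2, mul_assoc]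

lemma le_prod_mul_add_sum_of_le_mul_add {s q b : ℕ → ℝ} {a : ℕ}
    (hq : ∀ k, a ≤ k → 0 ≤ q k) (hs : ∀ k, a ≤ k → s (k + 1) ≤ q k * s k + b k)
    {n : ℕ} (hn : a ≤ n) :
    s n ≤ (∏ j ∈ Ico a n, q j) * s a + ∑ k ∈ Ico a n, b k * ∏ j ∈ Ico (k + 1) n, q j := by
  induction n, hn using Nat.le_induction with
  | base => simp
  | succ n hn ih =>
    rw [prod_Ico_succ_top hn, sum_Ico_succ_top_mul_prod b q hn]
    calc s (n + 1) ≤ q n * s n + b n := hs n hn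
      _ ≤ q n * ((∏ j ∈ Ico a n, q j) * s a
            + ∑ k ∈ Ico a n, b k * ∏ j ∈ Ico (k + 1) n, q j) + b n := by
        gcongr
        exact hq n hn
      _ = _ := by ring

lemma sum_mul_prod_one_sub {R : Type*} [CommRing R] (x : ℕ → R) {a n : ℕ} (hn : a ≤ n) :
    ∑ k ∈ Ico a n, x k * ∏ j ∈ Ico (k + 1) n, (1 - x j) = 1 - ∏ j ∈ Ico a n, (1 - x j) := by
  induction n, hn using Nat.le_induction with
  | base => simp
  | succ n hn ih =>
    rw [sum_Ico_succ_top_mul_prod x (fun j => 1 - x j) hn, ih, prod_Ico_succ_top hn]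
    ring

lemma sum_sq_mul_prod_one_sub_le {x : ℕ → ℝ} {m N : ℕ} (hmN : m < N)
    (hx : ∀ k ∈ Ico m N, 0 ≤ x k ∧ x k ≤ x m) (hm : x m ≤ 1) :
    ∑ k ∈ Ico m N, x k ^ 2 * ∏ j ∈ Ico (k + 1) N, (1 - x j) ≤ x m := by
  have hprod : ∀ i, m ≤ i → 0 ≤ ∏ j ∈ Ico i N, (1 - x j) := fun i hi =>
    prod_nonneg fun j hj => by
      have := (hx j (Ico_subset_Ico_left hi hj)).2
      linarith
  have hxm : 0 ≤ x m := (hx m (left_mem_Ico.2 hmN)).1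
  calc ∑ k ∈ Ico m N, x k ^ 2 * ∏ j ∈ Ico (k + 1) N, (1 - x j)
      ≤ ∑ k ∈ Ico m N, x m * (x k * ∏ j ∈ Ico (k + 1) N, (1 - x j)) := by
        refine sum_le_sum fun k hk => ?_
        obtain ⟨hk0, hkm⟩ := hx k hk
        rw [sq, mul_assoc]
        exact mul_le_mul_of_nonneg_right hkm
          (mul_nonneg hk0 (hprod _ ((mem_Ico.1 hk).1.trans k.le_succ)))
    _ = x m * (1 - ∏ j ∈ Ico m N, (1 - x j)) := by rw [← mul_sum, sum_mul_prod_one_sub x hmN.le]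
    _ ≤ x m := mul_le_of_le_one_right hxm (by linarith [hprod m le_rfl])

lemma one_sub_two_rpow_neg_mul_le {β a b : ℝ} (hβ : 0 ≤ β) (ha : 0 ≤ a) (hab : 2 * a ≤ b) :
    (1 - 2 ^ (-β)) * b ^ β ≤ b ^ β - a ^ β := by
  have : a ^ β ≤ 2 ^ (-β) * b ^ β :=
    calc a ^ β ≤ (b / 2) ^ β := rpow_le_rpow ha (by linarith) hβ
      _ = 2 ^ (-β) * b ^ β := by
        rw [div_rpow (by linarith) zero_le_two, rpow_neg zero_le_two, div_eq_inv_mul]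
  linarith

section Stepsize

variable {α c : ℝ} {η : ℕ → ℝ}

lemma stepsize_nonneg (hc : 0 ≤ c) (hη : ∀ n : ℕ, 1 ≤ n → η n = c * (n : ℝ) ^ (-α)) {k : ℕ}
    (hk : 1 ≤ k) : 0 ≤ η k := by
  rw [hη k hk]
  positivity

lemma stepsize_antitone (hα : 0 ≤ α) (hc : 0 ≤ c)
    (hη : ∀ n : ℕ, 1 ≤ n → η n = c * (n : ℝ) ^ (-α)) {j k : ℕ} (hj : 1 ≤ j) (hjk : j ≤ k) :
    η k ≤ η j := by
  rw [hη j hj, hη k (hj.trans hjk)]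
  exact mul_le_mul_of_nonneg_left (rpow_le_rpow_of_nonpos (Nat.cast_pos.2 hj)
    (Nat.cast_le.2 hjk) (neg_nonpos.2 hα)) hc

lemma stepsize_le_two_rpow_mul_div (hα : 0 ≤ α) (hc : 0 ≤ c)
    (hη : ∀ n : ℕ, 1 ≤ n → η n = c * (n : ℝ) ^ (-α)) {m : ℕ} (hm : 1 ≤ m) {x : ℝ}
    (hx : 0 < x) (hxm : x ≤ 2 * m) : η m ≤ 2 ^ α * c / x ^ α :=
  calc η m = c * (m : ℝ) ^ (-α) := hη m hm
    _ ≤ c * (x / 2) ^ (-α) := mul_le_mul_of_nonneg_left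
      (rpow_le_rpow_of_nonpos (half_pos hx) (by linarith) (neg_nonpos.2 hα)) hc
    _ = 2 ^ α * c / x ^ α := by
      rw [rpow_neg (half_pos hx).le, div_rpow hx.le zero_le_two, inv_div]
      ring

lemma sum_stepsize_sq_le (hα : 0 ≤ α) (hη : ∀ n : ℕ, 1 ≤ n → η n = c * (n : ℝ) ^ (-α))
    {a b : ℕ} (ha : 1 < a) (hab : a ≤ b) :
    ∑ k ∈ Ico a b, η k ^ 2
      ≤ c ^ 2 * (chungPhi (1 - 2 * α) ((b : ℝ) - 1) - chungPhi (1 - 2 * α) ((a : ℝ) - 1)) := by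
  have hsq : ∀ k ∈ Ico a b, η k ^ 2 = c ^ 2 * (k : ℝ) ^ ((1 - 2 * α) - 1) := fun k hk => by
    have hk : 1 ≤ k := by have := (mem_Ico.1 hk).1; omega
    rw [hη k hk, mul_pow, ← rpow_mul_natCast (Nat.cast_nonneg k)]
    congr 2
    push_cast
    ring
  rw [sum_congr rfl hsq, ← mul_sum]
  exact mul_le_mul_of_nonneg_left (sum_rpow_le_chungPhi_sub (by linarith) ha hab) (sq_nonneg c)

lemma prod_one_sub_stepsize_le (hα : 0 ≤ α) (hα1 : α < 1) (hc : 0 ≤ c)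
    (hη : ∀ n : ℕ, 1 ≤ n → η n = c * (n : ℝ) ^ (-α)) {a b : ℕ} (ha : 1 ≤ a) (hab : a ≤ b)
    (h1 : ∀ j ∈ Ico a b, η j ≤ 1) :
    ∏ j ∈ Ico a b, (1 - η j)
      ≤ exp (-(c * ((b : ℝ) ^ (1 - α) - (a : ℝ) ^ (1 - α)) / (1 - α))) := by
  refine (prod_one_sub_le_exp_neg_sum _ h1).trans (exp_le_exp.2 (neg_le_neg ?_))
  have hsum : ∑ j ∈ Ico a b, η j = c * ∑ k ∈ Ico a b, (k : ℝ) ^ ((1 - α) - 1) := by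
    rw [mul_sum, sub_sub_cancel_left]
    exact sum_congr rfl fun k hk => hη k (ha.trans (mem_Ico.1 hk).1)
  have hφ : ((b : ℝ) ^ (1 - α) - (a : ℝ) ^ (1 - α)) / (1 - α)
      = chungPhi (1 - α) b - chungPhi (1 - α) a := by
    rw [chungPhi_of_ne_zero (by linarith), chungPhi_of_ne_zero (by linarith)]
    ring
  rw [hsum, mul_div_assoc, hφ]
  exact mul_le_mul_of_nonneg_left (chungPhi_sub_le_sum_rpow (by linarith) ha hab) hc

lemma prod_one_sub_stepsize_le_exp_mul_exp (hα : 0 ≤ α) (hα1 : α < 1) (hc : 0 ≤ c)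
    (hη : ∀ n : ℕ, 1 ≤ n → η n = c * (n : ℝ) ^ (-α)) {a b : ℕ} (ha : 1 ≤ a) (hab : a ≤ b)
    (h1 : ∀ j ∈ Ico a b, η j ≤ 1) {t : ℝ} (ht : t ≤ 1) :
    ∏ j ∈ Ico a b, (1 - η j) ≤ exp (c * (a : ℝ) ^ (1 - α) / (1 - α))
      * exp (-c * t * (b : ℝ) ^ (1 - α) / (1 - α)) := by
  refine (prod_one_sub_stepsize_le hα hα1 hc hη ha hab h1).trans ?_
  rw [← exp_add, exp_le_exp]
  have hX : 0 ≤ c * (b : ℝ) ^ (1 - α) / (1 - α) :=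
    div_nonneg (mul_nonneg hc (rpow_nonneg (Nat.cast_nonneg b) _)) (by linarith)
  have htX := mul_le_of_le_one_left hX ht
  calc -(c * ((b : ℝ) ^ (1 - α) - (a : ℝ) ^ (1 - α)) / (1 - α))
      = c * (a : ℝ) ^ (1 - α) / (1 - α) - c * (b : ℝ) ^ (1 - α) / (1 - α) := by ring
    _ ≤ c * (a : ℝ) ^ (1 - α) / (1 - α) - t * (c * (b : ℝ) ^ (1 - α) / (1 - α)) := by linarith
    _ = _ := by ring

lemma sum_stepsize_sq_mul_prod_le (hα : 0 ≤ α) (hα1 : α < 1) (hc : 0 ≤ c)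
    (hη : ∀ n : ℕ, 1 ≤ n → η n = c * (n : ℝ) ^ (-α)) {a m N : ℕ} (ha : 1 < a) (ham : a ≤ m)
    (hmN : 2 * m ≤ N) (h1 : ∀ j ∈ Ico a N, η j ≤ 1) :
    ∑ k ∈ Ico a m, η k ^ 2 * ∏ j ∈ Ico (k + 1) N, (1 - η j)
      ≤ c ^ 2 * chungPhi (1 - 2 * α) ((m : ℝ) - 1)
        * exp (-c * (1 - 2 ^ (α - 1)) * (N : ℝ) ^ (1 - α) / (1 - α)) := by
  set E := exp (-c * (1 - 2 ^ (α - 1)) * (N : ℝ) ^ (1 - α) / (1 - α))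
  have hprod : ∀ k ∈ Ico a m, ∏ j ∈ Ico (k + 1) N, (1 - η j) ≤ E := by
    intro k hk
    obtain ⟨hak, hkm⟩ := mem_Ico.1 hk
    refine (prod_one_sub_stepsize_le hα hα1 hc hη (by omega) (by omega)
      fun j hj => h1 j (Ico_subset_Ico (by omega) le_rfl hj)).trans (exp_le_exp.2 ?_)
    have hgap := one_sub_two_rpow_neg_mul_le (β := 1 - α) (by linarith)
      (Nat.cast_nonneg (k + 1))
      (show 2 * ((k + 1 : ℕ) : ℝ) ≤ N by exact_mod_cast (by omega : 2 * (k + 1) ≤ N))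
    rw [neg_sub] at hgap
    rw [neg_mul, neg_mul, neg_div, neg_le_neg_iff, mul_assoc]
    exact div_le_div_of_nonneg_right (mul_le_mul_of_nonneg_left hgap hc) (by linarith)
  have hφ : 0 ≤ chungPhi (1 - 2 * α) ((a : ℝ) - 1) :=
    chungPhi_nonneg (by linarith [(show (2 : ℝ) ≤ a by exact_mod_cast ha)])
  calc ∑ k ∈ Ico a m, η k ^ 2 * ∏ j ∈ Ico (k + 1) N, (1 - η j)
      ≤ ∑ k ∈ Ico a m, η k ^ 2 * E := sum_le_sum fun k hk =>
        mul_le_mul_of_nonneg_left (hprod k hk) (sq_nonneg _)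
    _ = (∑ k ∈ Ico a m, η k ^ 2) * E := by rw [sum_mul]
    _ ≤ c ^ 2 * (chungPhi (1 - 2 * α) ((m : ℝ) - 1) - chungPhi (1 - 2 * α) ((a : ℝ) - 1)) * E := by
        gcongr
        exact sum_stepsize_sq_le hα hη ha ham
    _ ≤ c ^ 2 * chungPhi (1 - 2 * α) ((m : ℝ) - 1) * E := by gcongr; linarith

end Stepsize

theorem chung_lemma_alpha_lt_one_general (α c τ : ℝ) (hα : 0 < α) (hα1 : α < 1)
    (hc : 0 < c) (hτ : 0 < τ) (η s : ℕ → ℝ)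
    (hη : ∀ n : ℕ, 1 ≤ n → η n = c * (n : ℝ) ^ (-α))
    (hs0 : ∀ n, 0 ≤ s n)
    (hrec : ∀ n : ℕ, 1 ≤ n → s (n + 1) ≤ (1 - η n) * s n + τ * η n ^ 2)
    (n₀ : ℕ) (hn₀ : 1 < n₀) (hn₀le : η n₀ ≤ 1)
    (t : ℝ) (ht : t = 1 - (2 : ℝ) ^ (α - 1)) :
    ∀ n : ℕ, 2 * n₀ ≤ n →
      s (n + 1) ≤ (τ * c ^ 2 * chungPhi (1 - 2 * α) (n : ℝ)
          + s n₀ * Real.exp (c * (n₀ : ℝ) ^ (1 - α) / (1 - α)))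
          * Real.exp (-c * t * ((n : ℝ) + 1) ^ (1 - α) / (1 - α))
        + τ * 2 ^ α * c / ((n : ℝ) - 2) ^ α := by
  intro n hn
  subst ht
  set m := n / 2 with hm
  have hη1 : ∀ j, n₀ ≤ j → η j ≤ 1 := fun j hj =>
    (stepsize_antitone hα.le hc.le hη (by omega) hj).trans hn₀le
  have hη1' : ∀ j ∈ Ico n₀ (n + 1), η j ≤ 1 := fun j hj => hη1 j (mem_Ico.1 hj).1
  have hunroll := le_prod_mul_add_sum_of_le_mul_add (s := s) (b := fun k => τ * η k ^ 2)
    (fun k hk => sub_nonneg.2 (hη1 k hk)) (fun k hk => hrec k (by omega)) (by omega : n₀ ≤ n + 1)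
  simp only [mul_assoc, ← mul_sum] at hunroll
  rw [← sum_Ico_consecutive _ (by omega : n₀ ≤ m) (by omega : m ≤ n + 1), mul_add] at hunroll
  have hinit := prod_one_sub_stepsize_le_exp_mul_exp hα.le hα1 hc.le hη (by omega)
    (by omega : n₀ ≤ n + 1) hη1' (t := 1 - 2 ^ (α - 1))
    (by linarith [rpow_pos_of_pos two_pos (α - 1)])
  have hhead := sum_stepsize_sq_mul_prod_le hα.le hα1 hc.le hη hn₀ (by omega : n₀ ≤ m)
    (by omega : 2 * m ≤ n + 1) hη1'
  have htail := sum_sq_mul_prod_one_sub_le (x := η) (by omega : m < n + 1)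
    (fun k hk => have hmk := (mem_Ico.1 hk).1
      ⟨stepsize_nonneg hc.le hη (by omega), stepsize_antitone hα.le hc.le hη (by omega) hmk⟩)
    (hη1 m (by omega))
  have hηm := stepsize_le_two_rpow_mul_div hα.le hc.le hη (m := m) (x := (n : ℝ) - 2) (by omega)
    (by linarith [(show (4 : ℝ) ≤ n by exact_mod_cast (by omega : 4 ≤ n))])
    (by linarith [(show (n : ℝ) ≤ 2 * m + 1 by exact_mod_cast (by omega : n ≤ 2 * m + 1))])
  have hφ : chungPhi (1 - 2 * α) ((m : ℝ) - 1) ≤ chungPhi (1 - 2 * α) n :=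
    chungPhi_le_chungPhi (by linarith [(show (2 : ℝ) ≤ m by exact_mod_cast (by omega : 2 ≤ m))])
      (by linarith [(show (m : ℝ) ≤ n by exact_mod_cast (by omega : m ≤ n))])
  push_cast at hinit hhead
  calc s (n + 1) ≤ _ := hunroll
    _ ≤ exp (c * (n₀ : ℝ) ^ (1 - α) / (1 - α))
          * exp (-c * (1 - 2 ^ (α - 1)) * ((n : ℝ) + 1) ^ (1 - α) / (1 - α)) * s n₀
        + (τ * (c ^ 2 * chungPhi (1 - 2 * α) n
          * exp (-c * (1 - 2 ^ (α - 1)) * ((n : ℝ) + 1) ^ (1 - α) / (1 - α)))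
        + τ * (2 ^ α * c / ((n : ℝ) - 2) ^ α)) := by
      gcongr
      · exact hs0 n₀
      · exact hhead.trans (by gcongr)
      · exact htail.trans hηm
    _ = _ := by ring

theorem chung_lemma_alpha_lt_one (α c τ : ℝ) (hα : 0 < α) (hα1 : α < 1)
    (hc : 0 < c) (hτ : 0 < τ) (η s : ℕ → ℝ)
    (hη : ∀ n : ℕ, 1 ≤ n → η n = c * (n : ℝ) ^ (-α))
    (hs0 : ∀ n, 0 ≤ s n)
    (hrec : ∀ n : ℕ, 1 ≤ n → s (n + 1) ≤ (1 - η n) * s n + τ * η n ^ 2)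
    (n₀ : ℕ) (hn₀ : 1 < n₀) (hn₀le : η n₀ ≤ 1)
    (hn₀min : ∀ m : ℕ, 1 < m → η m ≤ 1 → n₀ ≤ m)
    (t : ℝ) (ht : t = 1 - (2 : ℝ) ^ (α - 1)) (ht0 : 0 ≤ t) :
    ∀ n : ℕ, 2 * n₀ ≤ n →
      s (n + 1) ≤ (τ * c ^ 2 * chungPhi (1 - 2 * α) (n : ℝ)
          + s n₀ * Real.exp (c * (n₀ : ℝ) ^ (1 - α) / (1 - α)))
          * Real.exp (-c * t * ((n : ℝ) + 1) ^ (1 - α) / (1 - α))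
        + τ * 2 ^ α * c / ((n : ℝ) - 2) ^ α :=
  chung_lemma_alpha_lt_one_general α c τ hα hα1 hc hτ η s hη hs0 hrec n₀ hn₀ hn₀le t ht
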